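/- For every i ∈ ℤ^n and every ℓ = (ℓ_a)_{a∈A} ∈ ℤ^{|A|} with Σ_{a∈A} ℓ_a·a = 0, the formal power series F_i(Λ) satisfies the box equation (∏_{a : ℓ_a > 0} (∂/∂Λ_a)^{ℓ_a}) F_i(Λ) = (∏_{a : ℓ_a < 0} (∂/∂Λ_a)^{−ℓ_a}) F_i(Λ) in ℚ[[Λ_a : a ∈ A]]. -/

import Mathlib

/-!
Differentiating `exp (f_Λ)` by `∂^m` shifts the coefficient `Λ^(u+m)/(u+m)!` to `Λ^u/u!`, so
`∂^m F_i = F_{i - Σ_a m_a a}`. Splitting `ℓ = ℓ⁺ - ℓ⁻`, the hypothesis `Σ_a ℓ_a a = 0` says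
`Σ_a ℓ⁺_a a = Σ_a ℓ⁻_a a`, hence both sides of the box equation are the same series.
-/

/-- The `A`-hypergeometric series `F_i(Λ) = Σ_u Λ^u / ∏_a u_a!`, summed over
`u ∈ ℤ_{≥0}^{|A|}` with `Σ_a u_a·a = i`, as a multivariate formal power series in the
variables `Λ_a`, `a ∈ A`. -/
noncomputable def hypergeomF {n : ℕ} (A : Finset (Fin n → ℤ)) (i : Fin n → ℤ) :
    MvPowerSeries {a // a ∈ A} ℚ :=
  fun u => if (∑ a : {a // a ∈ A}, u a • (a : Fin n → ℤ)) = i then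
    (∏ a : {a // a ∈ A}, ((u a).factorial : ℚ))⁻¹ else 0

/-- The formal differential operator `∏_a (∂/∂Λ_a)^{m_a}` on multivariate formal power
series: the coefficient of `Λ^u` in `(∏_a (∂/∂Λ_a)^{m_a}) f` is
`(∏_a (u_a+m_a)!/u_a!)` times the coefficient of `Λ^{u+m}` in `f`. -/
noncomputable def multiDeriv {σ : Type*} (m : σ →₀ ℕ) (f : MvPowerSeries σ ℚ) :
    MvPowerSeries σ ℚ :=
  fun u => (∏ a ∈ m.support, (((u a + m a).factorial : ℚ) / ((u a).factorial : ℚ))) * f (u + m)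

open Finset

lemma prod_support_factorial_add_div {σ : Type*} [Fintype σ] (m u : σ →₀ ℕ) :
    ∏ a ∈ m.support, (((u a + m a).factorial : ℚ) / ((u a).factorial : ℚ)) =
      (∏ a, (((u + m) a).factorial : ℚ)) / ∏ a, ((u a).factorial : ℚ) := by
  rw [← prod_div_distrib]
  refine prod_subset (subset_univ _) fun a _ ha => ?_
  rw [Finsupp.notMem_support_iff.mp ha, add_zero,
    div_self (Nat.cast_ne_zero.mpr (Nat.factorial_ne_zero _))]

lemma multiDeriv_hypergeomF {n : ℕ} (A : Finset (Fin n → ℤ)) (i : Fin n → ℤ)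
    (m : {a // a ∈ A} →₀ ℕ) :
    multiDeriv m (hypergeomF A i) =
      hypergeomF A (i - ∑ a : {a // a ∈ A}, m a • (a : Fin n → ℤ)) := by
  funext u
  have hweight : (∑ a : {a // a ∈ A}, (u + m) a • (a : Fin n → ℤ)) = i ↔
      (∑ a : {a // a ∈ A}, u a • (a : Fin n → ℤ)) =
        i - ∑ a : {a // a ∈ A}, m a • (a : Fin n → ℤ) := by
    simp only [Finsupp.add_apply, add_smul, sum_add_distrib, eq_sub_iff_add_eq]
  have hfact : ∀ v : {a // a ∈ A} →₀ ℕ, (∏ a, ((v a).factorial : ℚ)) ≠ 0 := fun v =>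
    prod_ne_zero_iff.mpr fun a _ => Nat.cast_ne_zero.mpr (Nat.factorial_ne_zero _)
  simp only [multiDeriv, hypergeomF, hweight, prod_support_factorial_add_div]
  split_ifs
  · field_simp [hfact (u + m), hfact u]
  · rw [mul_zero]

theorem hypergeomF_box_equation_general
    (n : ℕ) (A : Finset (Fin n → ℤ))
    (i : Fin n → ℤ) (ℓ : {a // a ∈ A} → ℤ)
    (hℓ : (∑ a : {a // a ∈ A}, ℓ a • (a : Fin n → ℤ)) = 0) :
    multiDeriv (Finsupp.equivFunOnFinite.symm fun a => (ℓ a).toNat) (hypergeomF A i) =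
      multiDeriv (Finsupp.equivFunOnFinite.symm fun a => (-ℓ a).toNat) (hypergeomF A i) := by
  rw [multiDeriv_hypergeomF, multiDeriv_hypergeomF]
  congr 2
  rw [← sub_eq_zero, ← sum_sub_distrib, ← hℓ]
  refine sum_congr rfl fun a _ => ?_
  rw [Finsupp.coe_equivFunOnFinite_symm, Finsupp.coe_equivFunOnFinite_symm, ← natCast_zsmul,
    ← natCast_zsmul, ← sub_smul, Int.toNat_sub_toNat_neg]

/-- For every `i ∈ ℤⁿ` and every `ℓ = (ℓ_a) ∈ ℤ^{|A|}` with `Σ_a ℓ_a·a = 0`, the series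
`F_i(Λ)` satisfies the box equation
`(∏_{ℓ_a>0} (∂/∂Λ_a)^{ℓ_a}) F_i = (∏_{ℓ_a<0} (∂/∂Λ_a)^{−ℓ_a}) F_i`. -/
theorem hypergeomF_box_equation
    (n : ℕ) (hn : 1 ≤ n) (A : Finset (Fin n → ℤ))
    (hspan : Submodule.span ℝ ((fun a : Fin n → ℤ => fun j => (a j : ℝ)) '' A) = ⊤)
    (i : Fin n → ℤ) (ℓ : {a // a ∈ A} → ℤ)
    (hℓ : (∑ a : {a // a ∈ A}, ℓ a • (a : Fin n → ℤ)) = 0) :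
    multiDeriv (Finsupp.equivFunOnFinite.symm fun a => (ℓ a).toNat) (hypergeomF A i) =
      multiDeriv (Finsupp.equivFunOnFinite.symm fun a => (-ℓ a).toNat) (hypergeomF A i) :=
  hypergeomF_box_equation_general n A i ℓ hℓ
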